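/- arXiv:2104.08435 — 4 statements merged into one kernel-verified Lean document; each statement's English description precedes it below -/
import Mathlib

section
/- Let R be a commutative ring with involution *. Then R is *-clean (every element is the sum of a unit and a *-invariant idempotent) if and only if R is clean and every idempotent of R satisfies e* = e. -/
theorem IsIdempotentElem.add_eq_one_of_isUnit_sub {R : Type*} [CommRing R] {e f : R}
    (he : IsIdempotentElem e) (hf : IsIdempotentElem f) (h : IsUnit (e - f)) : e + f = 1 := by
  have hprod : (e - f) * (e + f - 1) = 0 := by
    linear_combination (he.eq : e * e = e) - (hf.eq : f * f = f)
  exact sub_eq_zero.mp (h.mul_right_eq_zero.mp hprod)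

theorem star_eq_self_of_isIdempotentElem_of_eq_unit_add_projection {R : Type*} [CommRing R]
    [StarRing R] {e u f : R} (he : IsIdempotentElem e) (hu : IsUnit u)
    (hf : IsIdempotentElem f) (hf_star : star f = f) (heq : e = u + f) : star e = e := by
  have hu_eq : u = e - f := by rw [heq]; ring
  have hsum : e = 1 - f := eq_sub_of_add_eq (he.add_eq_one_of_isUnit_sub hf (hu_eq ▸ hu))
  rw [hsum, star_sub, star_one, hf_star]

/-- A commutative ring with involution is *-clean (every element is a unit plus a
*-invariant idempotent) iff it is clean and every idempotent is *-invariant. -/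
theorem star_clean_iff_clean_and_idempotents_projections
    (R : Type*) [CommRing R] [StarRing R] :
    (∀ a : R, ∃ u e : R, IsUnit u ∧ IsIdempotentElem e ∧ star e = e ∧ a = u + e) ↔
    ((∀ a : R, ∃ u e : R, IsUnit u ∧ IsIdempotentElem e ∧ a = u + e) ∧
      (∀ e : R, IsIdempotentElem e → star e = e)) := by
  constructor
  · intro h
    refine ⟨fun a => ?_, fun e he => ?_⟩
    · obtain ⟨u, f, hu, hf, -, rfl⟩ := h a
      exact ⟨u, f, hu, hf, rfl⟩
    · obtain ⟨u, f, hu, hf, hf_star, heq⟩ := h e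
      exact star_eq_self_of_isIdempotentElem_of_eq_unit_add_projection he hu hf hf_star heq
  · rintro ⟨hclean, hproj⟩ a
    obtain ⟨u, f, hu, hf, rfl⟩ := hclean a
    exact ⟨u, f, hu, hf, hproj f hf, rfl⟩
end

section
/- Let F be a field of characteristic p > 0 and G a finite abelian group with G = P × H, where P is the Sylow p-subgroup of G and H has order coprime to p. Then every idempotent of the group algebra FG lies in the subalgebra FH. -/
/-!
In characteristic `p` the Frobenius map `x ↦ x ^ p ^ k` of the commutative ring `F[G]` sends
`∑ a_g g` to `∑ a_g ^ p ^ k g ^ p ^ k`, so `x ^ p ^ k` is supported on `p ^ k`-th powers.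
Taking `p ^ k = |P|`, such powers lie in `{1} × H`, and an idempotent satisfies `e = e ^ p ^ k`.
-/

namespace MonoidAlgebra

instance charP {R G : Type*} [CommSemiring R] [Monoid G] (p : ℕ) [CharP R p] :
    CharP (MonoidAlgebra R G) p :=
  charP_of_injective_algebraMap (R := R) single_right_injective p

variable {R G : Type*} [CommSemiring R] [CommMonoid G] (p : ℕ) [Fact p.Prime] [CharP R p]

theorem exists_pow_char_pow_eq_mapDomain (k : ℕ) (x : MonoidAlgebra R G) :
    ∃ y : MonoidAlgebra R G, x ^ p ^ k = mapDomain (· ^ p ^ k) y := by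
  induction x using MonoidAlgebra.induction with
  | zero => exact ⟨0, by simp [(Fact.out : p.Prime).ne_zero]⟩
  | single_add a r x _ _ ih =>
    obtain ⟨y, hy⟩ := ih
    exact ⟨single a (r ^ p ^ k) + y, by
      rw [add_pow_char_pow, single_pow, hy, mapDomain_add, mapDomain_single]⟩

theorem coeff_pow_char_pow_of_notMem_range {k : ℕ} (x : MonoidAlgebra R G) {g : G}
    (hg : g ∉ Set.range (· ^ p ^ k)) : (x ^ p ^ k).coeff g = 0 := by
  obtain ⟨y, hy⟩ := exists_pow_char_pow_eq_mapDomain p k x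
  rw [hy, coeff_mapDomain]
  exact Finsupp.mapDomain_of_notMem_range _ _ hg

end MonoidAlgebra

theorem idempotents_lie_in_FH_general
    (p : ℕ) [Fact p.Prime] (F : Type*) [Field F] [CharP F p]
    (P H : Type*) [CommGroup P] [CommGroup H] [Finite P]
    (hP : IsPGroup p P)
    (e : MonoidAlgebra F (P × H)) (he : IsIdempotentElem e) :
    ∀ g : P × H, g.1 ≠ 1 → e.coeff g = 0 := by
  intro g hg
  obtain ⟨k, hk⟩ := hP.exists_card_eq
  have he_pow : e ^ p ^ k = e := he.pow_eq (pow_ne_zero k (Fact.out : p.Prime).ne_zero)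
  rw [← he_pow]
  refine MonoidAlgebra.coeff_pow_char_pow_of_notMem_range p e ?_
  rintro ⟨x, rfl⟩
  exact hg (by rw [Prod.pow_fst, ← hk, pow_card_eq_one'])

/-- Let `F` be a field of characteristic `p > 0` and `G = P × H` a finite abelian group,
where `P` is the Sylow `p`-subgroup and `H` has order coprime to `p`. Then every
idempotent of `FG` lies in the subalgebra `FH`, i.e., its coefficients vanish outside
`{1} × H`. -/
theorem idempotents_lie_in_FH
    (p : ℕ) [Fact p.Prime] (F : Type*) [Field F] [CharP F p]
    (P H : Type*) [CommGroup P] [CommGroup H] [Finite P] [Finite H]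
    (hP : IsPGroup p P) (hH : Nat.Coprime p (Nat.card H))
    (e : MonoidAlgebra F (P × H)) (he : IsIdempotentElem e) :
    ∀ g : P × H, g.1 ≠ 1 → e.coeff g = 0 :=
  idempotents_lie_in_FH_general p F P H hP e he
end

section
/- Every idempotent of the group algebra F₂G of a finite abelian group G of odd order is a sum of elements of the form g + g² + g⁴ + ⋯ + g^{2^l}, where for each such summand l is the smallest nonnegative integer with g^{2^{l+1}} = g, and the orbits involved are pairwise disjoint. -/
/-!
Over `𝔽₂` the squaring map of the commutative algebra `𝔽₂G` is additive, so
`(∑ a_g g)² = ∑ a_g g²`. Since `|G|` is odd, squaring permutes `G`, and `e² = e` says that the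
coefficients of `e` are constant along the orbits of this permutation: the support of `e` is a
disjoint union of squaring orbits. The orbit of `g` is `{g^(2^i) | i < n}`, listed without
repetition, where `n = l g + 1` is the minimal period of `g`.
-/

open Finset Function

namespace MonoidAlgebra

section Frobenius

variable {p : ℕ} [Fact p.Prime] {G : Type*} [CommMonoid G]

theorem pow_char_eq_mapDomain (x : MonoidAlgebra (ZMod p) G) :
    x ^ p = mapDomain (· ^ p) x := by
  have : CharP (MonoidAlgebra (ZMod p) G) p := charP_of_injective_algebraMap' (ZMod p) p
  induction x using MonoidAlgebra.induction_linear with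
  | zero => simp [zero_pow (Fact.out : p.Prime).ne_zero]
  | add x y hx hy => rw [add_pow_char, hx, hy, mapDomain_add]
  | single g a => rw [single_pow, ZMod.pow_card, mapDomain_single]

theorem coeff_pow_char_of_isIdempotentElem {e : MonoidAlgebra (ZMod p) G}
    (he : IsIdempotentElem e) (hG : Injective (· ^ p : G → G)) (g : G) :
    e.coeff (g ^ p) = e.coeff g := by
  nth_rw 1 [← he.pow_eq (Fact.out : p.Prime).ne_zero, pow_char_eq_mapDomain, coeff_mapDomain]
  exact Finsupp.mapDomain_apply hG e.coeff g

end Frobenius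

theorem eq_sum_single_one_support {G : Type*} (x : MonoidAlgebra (ZMod 2) G) :
    x = ∑ g ∈ x.coeff.support, single g 1 := by
  conv_lhs => rw [← sum_coeff_single x]
  exact sum_congr rfl fun g hg =>
    congrArg (single g) (Fin.eq_one_of_ne_zero _ (Finsupp.mem_support_iff.1 hg))

end MonoidAlgebra

section PeriodicOrbit

variable {α : Type*} [DecidableEq α] {f : α → α} {x y : α}

theorem Cycle.mem_toFinset {s : Cycle α} : x ∈ s.toFinset ↔ x ∈ s := by
  induction s using Quotient.inductionOn'
  simp

namespace Function

theorem toFinset_periodicOrbit (f : α → α) (x : α) :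
    (periodicOrbit f x).toFinset = (range (minimalPeriod f x)).image (f^[·] x) := by
  ext
  simp [periodicOrbit_def, eq_comm]

theorem sum_toFinset_periodicOrbit {M : Type*} [AddCommMonoid M] (φ : α → M) :
    ∑ y ∈ (periodicOrbit f x).toFinset, φ y = ∑ i ∈ range (minimalPeriod f x), φ (f^[i] x) := by
  rw [toFinset_periodicOrbit]
  exact sum_image fun _ hi _ hj =>
    iterate_injOn_Iio_minimalPeriod (by simpa using hi) (by simpa using hj)

theorem mem_toFinset_periodicOrbit (hx : x ∈ periodicPts f) :
    y ∈ (periodicOrbit f x).toFinset ↔ ∃ n, f^[n] x = y :=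
  Cycle.mem_toFinset.trans (mem_periodicOrbit_iff hx)

theorem toFinset_periodicOrbit_eq_of_mem (hx : x ∈ periodicPts f)
    (hy : y ∈ (periodicOrbit f x).toFinset) :
    (periodicOrbit f y).toFinset = (periodicOrbit f x).toFinset := by
  obtain ⟨n, rfl⟩ := (mem_toFinset_periodicOrbit hx).1 hy
  rw [periodicOrbit_apply_iterate_eq hx]

end Function

theorem Set.MapsTo.exists_eq_biUnion_periodicOrbit {T : Finset α}
    (hT : Set.MapsTo f T T) (hTper : (T : Set α) ⊆ periodicPts f) :
    ∃ S : Finset α, (S : Set α).PairwiseDisjoint (fun x => (periodicOrbit f x).toFinset) ∧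
      T = S.biUnion fun x => (periodicOrbit f x).toFinset := by
  set orbit := fun x => (periodicOrbit f x).toFinset
  obtain ⟨S, hST, hinj, himage⟩ := exists_subset_injOn_image_eq_of_surjOn (T : Set α)
    (T.image orbit) (by simpa using Set.surjOn_image orbit T)
  refine ⟨S, fun x hx y hy hne => Finset.disjoint_left.2 fun z hzx hzy => hne (hinj hx hy ?_), ?_⟩
  · exact (toFinset_periodicOrbit_eq_of_mem (hTper (hST hx)) hzx).symm.trans
      (toFinset_periodicOrbit_eq_of_mem (hTper (hST hy)) hzy)
  ext y
  simp only [Finset.mem_biUnion]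
  constructor
  · intro hy
    obtain ⟨x, hx, hxy⟩ := Finset.mem_image.1 (himage ▸ Finset.mem_image_of_mem orbit hy)
    exact ⟨x, hx, hxy ▸ (mem_toFinset_periodicOrbit (hTper hy)).2 ⟨0, rfl⟩⟩
  · rintro ⟨x, hx, hyx⟩
    obtain ⟨n, rfl⟩ := (mem_toFinset_periodicOrbit (hTper (hST hx))).1 hyx
    exact hT.iterate n (hST hx)

end PeriodicOrbit

/-- Every idempotent of `F₂G`, `G` a finite abelian group of odd order, is a sum of
orbit-indicator elements `g + g² + g⁴ + ⋯ + g^(2^(l g))` over pairwise disjoint orbits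
of the squaring map, where for each summand `l g` is the smallest nonnegative integer
with `g^(2^(l g + 1)) = g`. -/
theorem idempotent_eq_sum_orbits
    (G : Type*) [CommGroup G] [Fintype G] (hodd : Odd (Fintype.card G))
    (e : MonoidAlgebra (ZMod 2) G) (he : IsIdempotentElem e) :
    ∃ (S : Finset G) (l : G → ℕ),
      (∀ g ∈ S, g ^ (2 ^ (l g + 1)) = g ∧ ∀ j : ℕ, g ^ (2 ^ (j + 1)) = g → l g ≤ j) ∧
      (∀ g ∈ S, ∀ g' ∈ S, g ≠ g' → ∀ i j : ℕ, g ^ (2 ^ i) ≠ g' ^ (2 ^ j)) ∧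
      e = ∑ g ∈ S, ∑ i ∈ Finset.range (l g + 1),
            MonoidAlgebra.single (g ^ (2 ^ i)) (1 : ZMod 2) := by
  classical
  have hsq : Injective (· ^ 2 : G → G) :=
    (powCoprime (Nat.coprime_two_right.2 (Nat.card_eq_fintype_card (α := G) ▸ hodd))).injective
  have hper (g : G) : g ∈ periodicPts (· ^ 2) := hsq.mem_periodicPts g
  have hsupp : Set.MapsTo (· ^ 2) (e.coeff.support : Set G) e.coeff.support := fun g hg => by
    simpa [MonoidAlgebra.coeff_pow_char_of_isIdempotentElem he hsq] using hg
  obtain ⟨S, hdisj, hS⟩ := hsupp.exists_eq_biUnion_periodicOrbit fun g _ => hper g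
  have hiter (n : ℕ) (g : G) : (· ^ 2)^[n] g = g ^ 2 ^ n := congrFun (pow_iterate 2 n) g
  have hpos (g : G) : 0 < minimalPeriod (· ^ 2) g := minimalPeriod_pos_of_mem_periodicPts (hper g)
  refine ⟨S, fun g => minimalPeriod (· ^ 2) g - 1, fun g _ => ?_, fun g hg g' hg' hne i j => ?_, ?_⟩
  · simp only [Nat.sub_add_cancel (hpos g)]
    refine ⟨?_, fun j hj => ?_⟩
    · rw [← hiter]
      exact iterate_minimalPeriod
    · have hle := IsPeriodicPt.minimalPeriod_le j.succ_pos ((hiter _ g).trans hj)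
      omega
  · intro h
    rw [← hiter, ← hiter] at h
    exact disjoint_left.1 (hdisj hg hg' hne) ((mem_toFinset_periodicOrbit (hper g)).2 ⟨i, rfl⟩)
      ((mem_toFinset_periodicOrbit (hper g')).2 ⟨j, h.symm⟩)
  · rw [MonoidAlgebra.eq_sum_single_one_support e, hS, sum_biUnion hdisj]
    refine sum_congr rfl fun g _ => ?_
    rw [sum_toFinset_periodicOrbit, Nat.sub_add_cancel (hpos g)]
    simp only [hiter]
end

section
/- There is no positive integer t with 2^t ≡ −1 (mod 15); consequently, with the classical involution, F₂(C₃ × C₁₅) is not *-clean. -/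
/-! Send a generator of `C₁₅` to a root `β` of `X⁴ + X + 1` in `𝔽₁₆`, a primitive 15th root of
unity. This gives an algebra map `χ : 𝔽₂(C₃ × C₁₅) → 𝔽₁₆`, and `ψ := χ ∘ *` evaluates at `β⁻¹`
instead. Because `-1` is not a power of `2` mod 15, `β⁻¹` is not a Galois conjugate of `β`, so an
element `a` with `χ a = 0` and `ψ a = 1` exists. If `a = u + e` with `u` a unit and `e` a symmetric
idempotent, then `χ e = ψ e`; this common value is idempotent, and it is a unit because
`χ e = -χ u`, so it equals `1`. Hence `ψ u = 1 - 1 = 0`, a contradiction. -/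

open Polynomial MonoidAlgebra

theorem ZMod.two_pow_ne_neg_one_fifteen (t : ℕ) : (2 : ZMod 15) ^ t ≠ -1 := by
  rw [pow_eq_pow_mod t (show (2 : ZMod 15) ^ 4 = 1 by decide)]
  have hsmall : ∀ r < 4, (2 : ZMod 15) ^ r ≠ -1 := by decide
  exact hsmall _ (t.mod_lt four_pos)

theorem ne_add_of_map_eq_zero_of_map_eq_one {R S F : Type*} [Ring R] [Ring S] [Nontrivial S]
    [FunLike F R S] [RingHomClass F R S] {χ ψ : F} {a u e : R} (hχa : χ a = 0) (hψa : ψ a = 1)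
    (hu : IsUnit u) (he : IsIdempotentElem e) (hχψ : χ e = ψ e) : a ≠ u + e := by
  rintro rfl
  rw [map_add] at hχa hψa
  have hχe : χ e = 1 := by
    have hunit : IsUnit (χ e) := by
      simpa [eq_neg_of_add_eq_zero_left hχa] using hu.map χ
    exact (IsIdempotentElem.iff_eq_one_of_isUnit hunit).1 (he.map χ)
  rw [← hχψ, hχe, add_eq_right] at hψa
  exact not_isUnit_zero (hψa ▸ hu.map ψ)

theorem MonoidAlgebra.lift_mapDomain_inv {k G A : Type*} [CommSemiring k] [CommGroup G]
    [Semiring A] [Algebra k A] (φ : G →* A) (x : MonoidAlgebra k G) :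
    lift k A G φ (ofCoeff (Finsupp.mapDomain (fun g : G => g⁻¹) x.coeff)) =
      lift k A G (φ.comp invMonoidHom) x := by
  rw [lift_apply, lift_apply, coeff_ofCoeff,
    Finsupp.sum_mapDomain_index (fun _ => by simp) (fun _ _ _ => add_smul _ _ _)]
  rfl

abbrev C3C15 : Type := Multiplicative (ZMod 3) × Multiplicative (ZMod 15)

abbrev F16 : Type := AdjoinRoot (X ^ 4 + X + 1 : (ZMod 2)[X])

namespace F16

noncomputable abbrev β : F16 := AdjoinRoot.root _

theorem two_eq_zero : (2 : F16) = 0 := by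
  rw [← map_ofNat (algebraMap (ZMod 2) F16) 2, show (2 : ZMod 2) = 0 from rfl, map_zero]

theorem β_pow_four_add_β_add_one : β ^ 4 + β + 1 = 0 := by
  have h := AdjoinRoot.eval₂_root (X ^ 4 + X + 1 : (ZMod 2)[X])
  simp only [eval₂_add, eval₂_pow, eval₂_X, eval₂_one] at h
  exact h

theorem β_pow_fifteen : β ^ 15 = 1 := by
  linear_combination (β^11+β^8+β^7+β^5+β^3+β^2+β+1) * β_pow_four_add_β_add_one
    - (β^12+β^11+β^9+β^8+β^7+β^6+β^5+β^4+β^3+β^2+β+1) * two_eq_zero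

instance : Nontrivial F16 := by
  refine AdjoinRoot.nontrivial _ ?_
  rw [show (X ^ 4 + X + 1 : (ZMod 2)[X]).degree = 4 by compute_degree!]
  decide

noncomputable def character : C3C15 →* F16 :=
  (AddChar.zmodChar 15 β_pow_fifteen).toMonoidHom.comp (MonoidHom.snd _ _)

theorem character_apply (g : C3C15) : character g = β ^ (Multiplicative.toAdd g.2).val := rfl

/-- `β³ + β¹⁰ + β¹² = 0` while `β⁻³ + β⁻¹⁰ + β⁻¹² = β¹² + β⁵ + β³ = 1`. -/
noncomputable def separator : MonoidAlgebra (ZMod 2) C3C15 :=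
  of _ _ (1, .ofAdd 3) + of _ _ (1, .ofAdd 10) + of _ _ (1, .ofAdd 12)

theorem lift_character_separator : lift (ZMod 2) F16 C3C15 character separator = 0 := by
  simp only [separator, map_add, lift_of, character_apply]
  change β ^ 3 + β ^ 10 + β ^ 12 = 0
  linear_combination (β^8+β^6+β^5+β^4+β^3) * β_pow_four_add_β_add_one
    - (β^9+β^8+β^7+β^6+β^5+β^4) * two_eq_zero

theorem lift_character_inv_separator :
    lift (ZMod 2) F16 C3C15 (character.comp invMonoidHom) separator = 1 := by
  simp only [separator, map_add, lift_of, MonoidHom.comp_apply, character_apply]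
  change β ^ 12 + β ^ 5 + β ^ 3 = 1
  linear_combination (β^8+β^5+β^4+β^2+β+1) * β_pow_four_add_β_add_one
    - (β^9+β^8+β^6+β^5+β^4+β^2+β+1) * two_eq_zero

end F16

/-- There is no positive `t` with `2^t ≡ −1 (mod 15)`; consequently, with the classical
involution, `F₂(C₃ × C₁₅)` is not `*`-clean. -/
theorem F2_C3C15_not_star_clean :
    (¬ ∃ t : ℕ, 0 < t ∧ (2 : ZMod 15) ^ t = -1) ∧
    ¬ (∀ a : MonoidAlgebra (ZMod 2) (Multiplicative (ZMod 3) × Multiplicative (ZMod 15)),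
      ∃ u e : MonoidAlgebra (ZMod 2) (Multiplicative (ZMod 3) × Multiplicative (ZMod 15)),
        IsUnit u ∧ IsIdempotentElem e ∧
        Finsupp.mapDomain
          (fun g : Multiplicative (ZMod 3) × Multiplicative (ZMod 15) => g⁻¹) e.coeff = e.coeff ∧
        a = u + e) := by
  refine ⟨fun ⟨t, _, ht⟩ => ZMod.two_pow_ne_neg_one_fifteen t ht, fun hclean => ?_⟩
  obtain ⟨u, e, hu, he, hstar, hsplit⟩ := hclean F16.separator
  refine ne_add_of_map_eq_zero_of_map_eq_one F16.lift_character_separator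
    F16.lift_character_inv_separator hu he ?_ hsplit
  rw [← lift_mapDomain_inv, hstar, ofCoeff_coeff]
end
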